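/- arXiv:2311.15330 — 2 statements merged into one kernel-verified Lean document; each statement's English description precedes it below -/
import Mathlib

section
/- Let V be a type of vertices, let π_i, π_j : ℕ → V be the paths of two distinct agents i and j, let v ∈ V be a target vertex, and let τ, t_s, t be natural numbers with t_s ≤ t ≤ t_s + τ. Assume agent i executes a task of duration τ at v, i.e., whenever π_i s = v then π_i (s + k) = v for every k ≤ τ. If agent i violates some constraint in the set Ω₁ = {(i, v, t₁) : t_s ≤ t₁ ≤ t} (i.e., there exists t₁ with t_s ≤ t₁ ≤ t and π_i t₁ = v) and agent j violates some constraint in the set Ω₂ = {(j, v, t₂) : t ≤ t₂ ≤ t_s + τ} (i.e., there exists t₂ with t ≤ t₂ ≤ t_s + τ and π_j t₂ = v), then the two agents have a vertex conflict: there exists a time t' with π_i t' = v and π_j t' = v. (Hence Ω₁ and Ω₂ are mutually disjunctive constraint sets: no conflict-free joint path violates a constraint from each.) -/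
/-- If agent `i` executes a task of duration `τ` at vertex `v` (staying at `v` for `τ`
steps whenever it is at `v`), and agent `i` violates a constraint in
`Ω₁ = {(i,v,t₁) : t_s ≤ t₁ ≤ t}` while agent `j` violates a constraint in
`Ω₂ = {(j,v,t₂) : t ≤ t₂ ≤ t_s + τ}`, then the two agents have a vertex conflict. -/
theorem task_duration_constraint_sets_mutually_disjunctive
    {I V : Type*} (π : I → ℕ → V) (i j : I) (hij : i ≠ j)
    (v : V) (τ t_s t : ℕ) (hst : t_s ≤ t) (hte : t ≤ t_s + τ)
    (hexec : ∀ s, π i s = v → ∀ k, k ≤ τ → π i (s + k) = v)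
    (hviol₁ : ∃ t₁, t_s ≤ t₁ ∧ t₁ ≤ t ∧ π i t₁ = v)
    (hviol₂ : ∃ t₂, t ≤ t₂ ∧ t₂ ≤ t_s + τ ∧ π j t₂ = v) :
    ∃ t', π i t' = v ∧ π j t' = v := by
  obtain ⟨t₁, h1, h2, h3⟩ := hviol₁
  obtain ⟨t₂, h4, h5, h6⟩ := hviol₂
  refine ⟨t₂, ?_, h6⟩
  have h12 : t₁ ≤ t₂ := h2.trans h4
  have := hexec t₁ h3 (t₂ - t₁) (by omega)
  rwa [Nat.add_sub_cancel' h12] at this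
end

section
/- Let G be a simple graph on a vertex type V, let p be a walk in G from a to b, let k be a natural number, and let n : Fin (k+1) → ℕ be a monotone family of indices with n i ≤ p.length for every i. Then the sum over i : Fin k of the graph distances G.dist (p.getVert (n i)) (p.getVert (n (i+1))) is at most p.length. (Hence the cost of a target sequence, computed from pairwise shortest-path distances between consecutively visited targets, is a lower bound on the length of any walk that visits those targets in that order; this is why the cost of the best joint sequence lower-bounds the optimal solution cost.) -/
private lemma exists_walk_getVert_aux {V : Type*} (G : SimpleGraph V) {a b : V}
    (p : G.Walk a b) (d m : ℕ) (h : m + d ≤ p.length) :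
    ∃ q : G.Walk (p.getVert m) (p.getVert (m + d)), q.length ≤ d := by
  induction d with
  | zero => exact ⟨SimpleGraph.Walk.nil, by simp⟩
  | succ d ih =>
    obtain ⟨q, hq⟩ := ih (by omega)
    have hadj := p.adj_getVert_succ (show m + d < p.length by omega)
    exact ⟨(q.concat hadj).copy rfl (by ring_nf), by simp [SimpleGraph.Walk.length_concat]; omega⟩

private lemma dist_getVert_le_aux {V : Type*} (G : SimpleGraph V) {a b : V}
    (p : G.Walk a b) (d m : ℕ) (h : m + d ≤ p.length) :
    G.dist (p.getVert m) (p.getVert (m + d)) ≤ d := by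
  obtain ⟨q, hq⟩ := exists_walk_getVert_aux G p d m h
  exact (SimpleGraph.dist_le q).trans hq

/-- The sum of pairwise graph distances between consecutively visited vertices along a walk
(in visiting order given by monotone indices) is at most the length of the walk. -/
theorem sum_dist_visits_le_length {V : Type*} (G : SimpleGraph V) {a b : V}
    (p : G.Walk a b) (k : ℕ) (n : Fin (k + 1) → ℕ)
    (hmono : Monotone n) (hle : ∀ i, n i ≤ p.length) :
    ∑ i : Fin k, G.dist (p.getVert (n i.castSucc)) (p.getVert (n i.succ)) ≤ p.length := by
  set f : ℕ → ℕ := fun j => n ⟨min j k, by omega⟩ with hf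
  have hfmono : Monotone f := fun x y hxy => hmono (by simp [Fin.le_def]; omega)
  have hstep : ∀ i : Fin k,
      G.dist (p.getVert (n i.castSucc)) (p.getVert (n i.succ)) ≤ f (i + 1) - f i := by
    intro i
    have hik : (i : ℕ) < k := i.isLt
    have h1 : n i.castSucc = f i := by
      simp only [hf]; congr 1; ext; simp only [Fin.coe_castSucc]; omega
    have h2 : n i.succ = f (i + 1) := by
      simp only [hf]; congr 1; ext; simp only [Fin.val_succ]; omega
    have hmo : f i ≤ f (i + 1) := hfmono (by omega)
    have hle2 : f (i + 1) ≤ p.length := by rw [← h2]; exact hle _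
    rw [h1, h2]
    have := dist_getVert_le_aux G p (f (i + 1) - f i) (f i) (by omega)
    have heq : f i + (f (i + 1) - f i) = f (i + 1) := by omega
    rwa [heq] at this
  calc ∑ i : Fin k, G.dist (p.getVert (n i.castSucc)) (p.getVert (n i.succ))
      ≤ ∑ i : Fin k, (f (i + 1) - f i) := Finset.sum_le_sum fun i _ => hstep i
    _ = ∑ i ∈ Finset.range k, (f (i + 1) - f i) :=
        Fin.sum_univ_eq_sum_range (fun i => f (i + 1) - f i) k
    _ = f k - f 0 := Finset.sum_range_tsub hfmono k
    _ ≤ f k := Nat.sub_le _ _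
    _ ≤ p.length := by simpa [hf] using hle ⟨k, by omega⟩
end
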